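/- Let {x_k} ⊂ X with x_k ≥ 0 for all k, and let S ⊆ ℕ be infinite such that x_k → x* along k ∈ S for some x* ∈ X with x* ≥ 0. Assume (i) [∇c(x*) c(x*)]ᵢ > 0 for every i ∈ A(x*), and (ii) the block matrix [[0_{m×m}, ∇c(x*)ᵀ], [∇c(x*)_{A(x*)}, I_{A(x*)}]] ∈ ℝ^{(m+|A(x*)|)×(m+n)} has full row rank. Fix μ > 0 and for each k let (u_k, w_k) be the unique optimal solution of subproblem (V) at x_k with parameter μ, and set v_k := u_k + ∇c(x_k) w_k. Then x* satisfies 0 ≤ x* ⊥ ∇c(x*) c(x*) ≥ 0 if and only if v_k → 0 along k ∈ S. -/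

import Mathlib

open Matrix

/-- Euclidean norm of a vector in `ℝᵏ` (represented as `Fin k → ℝ`). -/
noncomputable def nrm2 {k : ℕ} (a : Fin k → ℝ) : ℝ := Real.sqrt (∑ i, (a i) ^ 2)

/-- Feasibility for subproblem (V): `Gᵀu = 0` and `x + u + Gw ≥ 0`. -/
def feasV {n m : ℕ} (G : Matrix (Fin n) (Fin m) ℝ) (x : Fin n → ℝ)
    (p : (Fin n → ℝ) × (Fin m → ℝ)) : Prop :=
  Gᵀ *ᵥ p.1 = 0 ∧ 0 ≤ x + p.1 + G *ᵥ p.2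

/-- Objective of subproblem (V): `(1/2)‖b + GᵀG w‖² + (1/2)μ‖u‖²`. -/
noncomputable def objV {n m : ℕ} (G : Matrix (Fin n) (Fin m) ℝ) (b : Fin m → ℝ) (μ : ℝ)
    (p : (Fin n → ℝ) × (Fin m → ℝ)) : ℝ :=
  (1 / 2) * nrm2 (b + Gᵀ *ᵥ (G *ᵥ p.2)) ^ 2 + (1 / 2) * μ * nrm2 p.1 ^ 2

open Filter

lemma dot_self_nonneg {k : ℕ} (a : Fin k → ℝ) : 0 ≤ a ⬝ᵥ a :=
  Finset.sum_nonneg fun i _ => mul_self_nonneg _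

lemma nrm2_sq {k : ℕ} (a : Fin k → ℝ) : nrm2 a ^ 2 = a ⬝ᵥ a := by
  rw [nrm2, Real.sq_sqrt (Finset.sum_nonneg fun i _ => sq_nonneg _)]
  simp [dotProduct, sq]

lemma objV_eq {n m : ℕ} (G : Matrix (Fin n) (Fin m) ℝ) (b : Fin m → ℝ) (μ : ℝ)
    (u : Fin n → ℝ) (w : Fin m → ℝ) :
    objV G b μ (u, w) = (1/2) * ((b + Gᵀ *ᵥ (G *ᵥ w)) ⬝ᵥ (b + Gᵀ *ᵥ (G *ᵥ w)))
      + (1/2) * μ * (u ⬝ᵥ u) := by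
  rw [objV, nrm2_sq, nrm2_sq]

lemma dot_adj {n m : ℕ} (G : Matrix (Fin n) (Fin m) ℝ) (w : Fin m → ℝ) (z : Fin n → ℝ) :
    w ⬝ᵥ (Gᵀ *ᵥ z) = (G *ᵥ w) ⬝ᵥ z := by
  rw [dotProduct_mulVec, vecMul_transpose]

lemma dot_expand {k : ℕ} (p q : Fin k → ℝ) (t : ℝ) :
    (p + t • q) ⬝ᵥ (p + t • q) = p ⬝ᵥ p + 2 * t * (p ⬝ᵥ q) + t^2 * (q ⬝ᵥ q) := by
  simp only [dotProduct_add, add_dotProduct, dotProduct_smul, smul_dotProduct,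
    smul_eq_mul, dotProduct_comm q p]
  ring

/-- Expansion of the objective along a line. -/
lemma objV_expand {n m : ℕ} (G : Matrix (Fin n) (Fin m) ℝ) (b : Fin m → ℝ) (μ : ℝ)
    (u du : Fin n → ℝ) (w dw : Fin m → ℝ) (t : ℝ) :
    objV G b μ (u + t • du, w + t • dw) = objV G b μ (u, w)
      + t * ((b + Gᵀ *ᵥ (G *ᵥ w)) ⬝ᵥ (Gᵀ *ᵥ (G *ᵥ dw)) + μ * (u ⬝ᵥ du))
      + t^2 * ((1/2) * ((Gᵀ *ᵥ (G *ᵥ dw)) ⬝ᵥ (Gᵀ *ᵥ (G *ᵥ dw))) + (1/2) * μ * (du ⬝ᵥ du)) := by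
  rw [objV_eq, objV_eq]
  have h1 : b + Gᵀ *ᵥ (G *ᵥ (w + t • dw)) = (b + Gᵀ *ᵥ (G *ᵥ w)) + t • (Gᵀ *ᵥ (G *ᵥ dw)) := by
    rw [mulVec_add, mulVec_smul, mulVec_add, mulVec_smul]; abel
  rw [h1, dot_expand, dot_expand]
  ring

/-- The linear coefficient is `g ⬝ᵥ dv`. -/
lemma lin_eq {n m : ℕ} (G : Matrix (Fin n) (Fin m) ℝ) (b : Fin m → ℝ) (μ : ℝ)
    (u du : Fin n → ℝ) (w dw : Fin m → ℝ)
    (hu : Gᵀ *ᵥ u = 0) (hdu : Gᵀ *ᵥ du = 0) :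
    (b + Gᵀ *ᵥ (G *ᵥ w)) ⬝ᵥ (Gᵀ *ᵥ (G *ᵥ dw)) + μ * (u ⬝ᵥ du)
      = (G *ᵥ (b + Gᵀ *ᵥ (G *ᵥ w)) + μ • u) ⬝ᵥ (du + G *ᵥ dw) := by
  set z := b + Gᵀ *ᵥ (G *ᵥ w) with hz
  have h1 : (G *ᵥ z) ⬝ᵥ du = 0 := by rw [← dot_adj, hdu, dotProduct_zero]
  have h2 : (G *ᵥ z) ⬝ᵥ (G *ᵥ dw) = z ⬝ᵥ (Gᵀ *ᵥ (G *ᵥ dw)) := (dot_adj G z (G *ᵥ dw)).symm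
  have h3 : u ⬝ᵥ (G *ᵥ dw) = 0 := by
    rw [dotProduct_comm, ← dot_adj, hu, dotProduct_zero]
  simp only [add_dotProduct, dotProduct_add, smul_dotProduct, smul_eq_mul, h1, h2, h3]
  ring

lemma nonneg_of_small_t (D Q : ℝ) (hQ : 0 ≤ Q)
    (h : ∀ t : ℝ, 0 < t → t ≤ 1 → 0 ≤ t * D + t^2 * Q) : 0 ≤ D := by
  by_contra hD
  push_neg at hD
  set t := min 1 (-D / (2*Q + 1)) with ht
  have ht0 : 0 < t := lt_min one_pos (div_pos (by linarith) (by linarith))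
  have ht1 : t ≤ 1 := min_le_left _ _
  have h2 : t ≤ -D / (2*Q+1) := min_le_right _ _
  have := h t ht0 ht1
  have htQ : t * Q ≤ -D / 2 := by
    have : t * Q ≤ (-D / (2*Q+1)) * Q := by nlinarith
    have h3 : (-D / (2*Q+1)) * Q ≤ -D/2 := by
      rw [div_mul_eq_mul_div, div_le_div_iff₀ (by positivity) (by norm_num)]
      nlinarith
    linarith
  nlinarith

section KKT
variable {n m : ℕ} (G : Matrix (Fin n) (Fin m) ℝ)

/-- From injectivity of `G`, the map `w ↦ GᵀG w` is bijective. -/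
lemma A_bij (hG : Function.Injective G.mulVec) :
    Function.Bijective (fun w => Gᵀ *ᵥ (G *ᵥ w)) := by
  have hinj : Function.Injective (fun w => Gᵀ *ᵥ (G *ᵥ w)) := by
    intro a b hab
    apply hG
    have h0 : Gᵀ *ᵥ (G *ᵥ (a - b)) = 0 := by
      rw [mulVec_sub, mulVec_sub]
      simpa [sub_eq_zero] using hab
    have : (G *ᵥ (a - b)) ⬝ᵥ (G *ᵥ (a - b)) = 0 := by
      rw [← dot_adj, h0, dotProduct_zero]
    have := dotProduct_self_eq_zero.mp this
    have : G *ᵥ a - G *ᵥ b = 0 := by rw [← mulVec_sub]; exact this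
    exact sub_eq_zero.mp this
  have heq : ∀ v, ((Gᵀ).mulVecLin.comp G.mulVecLin : (Fin m → ℝ) →ₗ[ℝ] (Fin m → ℝ)) v
      = Gᵀ *ᵥ (G *ᵥ v) := fun v => by
    simp only [LinearMap.coe_comp, Function.comp_apply, mulVecLin_apply]
  have : Function.Injective (((Gᵀ).mulVecLin.comp G.mulVecLin : (Fin m → ℝ) →ₗ[ℝ] (Fin m → ℝ))) := by
    intro a b hab
    rw [heq, heq] at hab
    exact hinj hab
  have hsurj := LinearMap.injective_iff_surjective.mp this
  refine ⟨hinj, ?_⟩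
  intro y
  obtain ⟨w, hw⟩ := hsurj y
  exact ⟨w, (heq w).symm.trans hw⟩

/-- Decompose any direction `dv` as `du + G dw` with `Gᵀ du = 0`. -/
lemma decomp (hG : Function.Injective G.mulVec) (dv : Fin n → ℝ) :
    ∃ du dw, du + G *ᵥ dw = dv ∧ Gᵀ *ᵥ du = 0 := by
  obtain ⟨dw, hdw⟩ := (A_bij G hG).2 (Gᵀ *ᵥ dv)
  have hdw' : Gᵀ *ᵥ (G *ᵥ dw) = Gᵀ *ᵥ dv := hdw
  refine ⟨dv - G *ᵥ dw, dw, by abel, ?_⟩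
  rw [mulVec_sub, hdw', sub_self]

variable (b : Fin m → ℝ) (μ : ℝ) (x u : Fin n → ℝ) (w : Fin m → ℝ)

/-- The "gradient" vector at `(u,w)`. -/
noncomputable def gradV : Fin n → ℝ := G *ᵥ (b + Gᵀ *ᵥ (G *ᵥ w)) + μ • u

lemma gradV_def : gradV G b μ u w = G *ᵥ (b + Gᵀ *ᵥ (G *ᵥ w)) + μ • u := rfl

/-- Directional optimality: for any direction `dv` that keeps feasibility for small `t`,
`g ⬝ᵥ dv ≥ 0`. -/
lemma dir_nonneg (hμ : 0 < μ) (hG : Function.Injective G.mulVec)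
    (hfeas : feasV G x (u, w))
    (hopt : ∀ q, feasV G x q → objV G b μ (u, w) ≤ objV G b μ q)
    (dv : Fin n → ℝ)
    (hdir : ∀ t : ℝ, 0 < t → t ≤ 1 → 0 ≤ x + u + G *ᵥ w + t • dv) :
    0 ≤ gradV G b μ u w ⬝ᵥ dv := by
  obtain ⟨du, dw, hsum, hdu⟩ := decomp G hG dv
  have key : ∀ t : ℝ, 0 < t → t ≤ 1 →
      0 ≤ t * (gradV G b μ u w ⬝ᵥ dv)
        + t^2 * ((1/2) * ((Gᵀ *ᵥ (G *ᵥ dw)) ⬝ᵥ (Gᵀ *ᵥ (G *ᵥ dw))) + (1/2) * μ * (du ⬝ᵥ du)) := by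
    intro t ht0 ht1
    have hfeas' : feasV G x (u + t • du, w + t • dw) := by
      constructor
      · rw [mulVec_add, mulVec_smul, hfeas.1, hdu, smul_zero, add_zero]
      · have : x + (u + t • du) + G *ᵥ (w + t • dw) = x + u + G *ᵥ w + t • dv := by
          rw [mulVec_add, mulVec_smul, ← hsum]
          simp only [smul_add]
          abel
        rw [this]
        exact hdir t ht0 ht1
    have := hopt _ hfeas'
    rw [objV_expand] at this
    rw [lin_eq G b μ u du w dw hfeas.1 hdu, hsum] at this
    unfold gradV
    linarith
  refine nonneg_of_small_t _ _ ?_ key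
  have := dot_self_nonneg (Gᵀ *ᵥ (G *ᵥ dw))
  have := dot_self_nonneg du
  nlinarith

/-- KKT conditions at the optimum. -/
lemma kkt_of_opt (hμ : 0 < μ) (hG : Function.Injective G.mulVec) (hx : 0 ≤ x)
    (hfeas : feasV G x (u, w))
    (hopt : ∀ q, feasV G x q → objV G b μ (u, w) ≤ objV G b μ q) :
    (∀ i, 0 ≤ gradV G b μ u w i) ∧
      gradV G b μ u w ⬝ᵥ (x + u + G *ᵥ w) = 0 := by
  have hfv : 0 ≤ x + u + G *ᵥ w := hfeas.2
  constructor
  · intro i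
    have h := dir_nonneg G b μ x u w hμ hG hfeas hopt (Pi.single i 1) ?_
    · rwa [dotProduct_single, mul_one] at h
    · intro t ht0 _ j
      have := hfv j
      simp only [Pi.add_apply, Pi.smul_apply, smul_eq_mul, Pi.zero_apply] at this ⊢
      rcases eq_or_ne j i with rfl | hji
      · simp only [Pi.single_eq_same]
        nlinarith
      · simp only [Pi.single_eq_of_ne hji, mul_zero, add_zero]
        exact this
  · have h1 := dir_nonneg G b μ x u w hμ hG hfeas hopt (x + u + G *ᵥ w) ?_
    have h2 := dir_nonneg G b μ x u w hμ hG hfeas hopt (-(x + u + G *ᵥ w)) ?_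
    · rw [dotProduct_neg] at h2
      linarith
    · intro t ht0 ht1 j
      have := hfv j
      simp only [Pi.add_apply, Pi.smul_apply, Pi.neg_apply, smul_eq_mul, Pi.zero_apply,
        mul_neg] at this ⊢
      nlinarith
    · intro t ht0 ht1 j
      have := hfv j
      simp only [Pi.add_apply, Pi.smul_apply, smul_eq_mul, Pi.zero_apply] at this ⊢
      nlinarith

/-- KKT conditions imply global optimality (convexity). -/
lemma opt_of_kkt (hμ : 0 < μ) (hfeas : feasV G x (u, w))
    (hg : ∀ i, 0 ≤ gradV G b μ u w i)
    (hcomp : gradV G b μ u w ⬝ᵥ (x + u + G *ᵥ w) = 0) :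
    ∀ q, feasV G x q → objV G b μ (u, w) ≤ objV G b μ q := by
  rintro ⟨u', w'⟩ ⟨hq1, hq2⟩
  have hdu : Gᵀ *ᵥ (u' - u) = 0 := by rw [mulVec_sub, hfeas.1, hq1, sub_self]
  have expand := objV_expand G b μ u (u' - u) w (w' - w) 1
  simp only [one_smul, add_sub_cancel, one_pow, one_mul] at expand
  rw [lin_eq G b μ u (u' - u) w (w' - w) hfeas.1 hdu, ← gradV_def] at expand
  have hsum : (u' - u) + G *ᵥ (w' - w) = (x + u' + G *ᵥ w') - (x + u + G *ᵥ w) := by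
    rw [mulVec_sub]; abel
  rw [hsum, dotProduct_sub, hcomp, sub_zero] at expand
  have hL : 0 ≤ gradV G b μ u w ⬝ᵥ (x + u' + G *ᵥ w') :=
    Finset.sum_nonneg fun i _ => mul_nonneg (hg i) (hq2 i)
  have hQ1 := dot_self_nonneg (Gᵀ *ᵥ (G *ᵥ (w' - w)))
  have hQ2 := dot_self_nonneg (u' - u)
  nlinarith [expand]

/-- Uniqueness: a feasible point with value ≤ a KKT point equals it. -/
lemma uniq_of_kkt (hμ : 0 < μ) (hG : Function.Injective G.mulVec)
    (hfeas : feasV G x (u, w))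
    (hg : ∀ i, 0 ≤ gradV G b μ u w i)
    (hcomp : gradV G b μ u w ⬝ᵥ (x + u + G *ᵥ w) = 0)
    (u' : Fin n → ℝ) (w' : Fin m → ℝ) (hq : feasV G x (u', w'))
    (hle : objV G b μ (u', w') ≤ objV G b μ (u, w)) :
    u' = u ∧ w' = w := by
  obtain ⟨hq1, hq2⟩ := hq
  have hdu : Gᵀ *ᵥ (u' - u) = 0 := by rw [mulVec_sub, hfeas.1, hq1, sub_self]
  have expand := objV_expand G b μ u (u' - u) w (w' - w) 1
  simp only [one_smul, add_sub_cancel, one_pow, one_mul] at expand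
  rw [lin_eq G b μ u (u' - u) w (w' - w) hfeas.1 hdu, ← gradV_def] at expand
  have hsum : (u' - u) + G *ᵥ (w' - w) = (x + u' + G *ᵥ w') - (x + u + G *ᵥ w) := by
    rw [mulVec_sub]; abel
  rw [hsum, dotProduct_sub, hcomp, sub_zero] at expand
  have hL : 0 ≤ gradV G b μ u w ⬝ᵥ (x + u' + G *ᵥ w') :=
    Finset.sum_nonneg fun i _ => mul_nonneg (hg i) (hq2 i)
  have hQ1 := dot_self_nonneg (Gᵀ *ᵥ (G *ᵥ (w' - w)))
  have hQ2 := dot_self_nonneg (u' - u)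
  have hdu0 : (u' - u) ⬝ᵥ (u' - u) = 0 := by nlinarith [expand]
  have hAdw0 : (Gᵀ *ᵥ (G *ᵥ (w' - w))) ⬝ᵥ (Gᵀ *ᵥ (G *ᵥ (w' - w))) = 0 := by nlinarith [expand]
  have h1 : u' - u = 0 := dotProduct_self_eq_zero.mp hdu0
  have h2 : Gᵀ *ᵥ (G *ᵥ (w' - w)) = 0 := dotProduct_self_eq_zero.mp hAdw0
  have h3 : w' - w = 0 := by
    have := (A_bij G hG).1 (a₁ := w' - w) (a₂ := 0)
    simp only [mulVec_zero] at this
    exact this h2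
  exact ⟨sub_eq_zero.mp h1, sub_eq_zero.mp h3⟩

end KKT

section Analysis
variable {α : Type*} {L : Filter α}

lemma tendsto_matrix_entry {p q : ℕ} {M : α → Matrix (Fin p) (Fin q) ℝ} {M0 : Matrix (Fin p) (Fin q) ℝ}
    (h : Tendsto M L (nhds M0)) (i : Fin p) (j : Fin q) :
    Tendsto (fun k => M k i j) L (nhds (M0 i j)) :=
  tendsto_pi_nhds.mp (tendsto_pi_nhds.mp h i) j

lemma tendsto_mulVec' {p q : ℕ} {M : α → Matrix (Fin p) (Fin q) ℝ} {v : α → Fin q → ℝ}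
    {M0 : Matrix (Fin p) (Fin q) ℝ} {v0 : Fin q → ℝ}
    (hM : Tendsto M L (nhds M0)) (hv : Tendsto v L (nhds v0)) :
    Tendsto (fun k => M k *ᵥ v k) L (nhds (M0 *ᵥ v0)) := by
  rw [tendsto_pi_nhds]
  intro i
  have h1 : ∀ k, (M k *ᵥ v k) i = ∑ j, M k i j * v k j := fun k => rfl
  have h2 : (M0 *ᵥ v0) i = ∑ j, M0 i j * v0 j := rfl
  simp only [h1, h2]
  exact tendsto_finset_sum _ fun j _ => (tendsto_matrix_entry hM i j).mul (tendsto_pi_nhds.mp hv j)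

lemma tendsto_transpose' {p q : ℕ} {M : α → Matrix (Fin p) (Fin q) ℝ} {M0 : Matrix (Fin p) (Fin q) ℝ}
    (h : Tendsto M L (nhds M0)) :
    Tendsto (fun k => (M k)ᵀ) L (nhds M0ᵀ) := by
  apply tendsto_pi_nhds.mpr
  intro j
  apply tendsto_pi_nhds.mpr
  intro i
  exact tendsto_matrix_entry h i j

lemma tendsto_dot' {p : ℕ} {a b : α → Fin p → ℝ} {a0 b0 : Fin p → ℝ}
    (ha : Tendsto a L (nhds a0)) (hb : Tendsto b L (nhds b0)) :
    Tendsto (fun k => a k ⬝ᵥ b k) L (nhds (a0 ⬝ᵥ b0)) :=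
  tendsto_finset_sum _ fun j _ => (tendsto_pi_nhds.mp ha j).mul (tendsto_pi_nhds.mp hb j)

lemma sq_le_dot {p : ℕ} (a : Fin p → ℝ) (i : Fin p) : a i ^ 2 ≤ a ⬝ᵥ a := by
  rw [sq]
  exact Finset.single_le_sum (f := fun j => a j * a j)
    (fun j _ => mul_self_nonneg _) (Finset.mem_univ i)

lemma norm_le_sqrt_dot {p : ℕ} (a : Fin p → ℝ) : ‖a‖ ≤ Real.sqrt (a ⬝ᵥ a) := by
  rw [pi_norm_le_iff_of_nonneg (Real.sqrt_nonneg _)]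
  intro i
  rw [Real.norm_eq_abs, ← Real.sqrt_sq_eq_abs]
  exact Real.sqrt_le_sqrt (sq_le_dot a i)

lemma tendsto_zero_of_dot {p : ℕ} {a : α → Fin p → ℝ}
    (h : Tendsto (fun k => a k ⬝ᵥ a k) L (nhds 0)) : Tendsto a L (nhds 0) := by
  rw [tendsto_pi_nhds]
  intro i
  have h0 : ((0 : Fin p → ℝ) i) = 0 := rfl
  rw [h0, tendsto_zero_iff_abs_tendsto_zero]
  have hsq : Tendsto (fun k => Real.sqrt (a k ⬝ᵥ a k)) L (nhds 0) := by
    have := (Real.continuous_sqrt.tendsto 0).comp h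
    rwa [Real.sqrt_zero] at this
  refine squeeze_zero (fun k => abs_nonneg _) (fun k => ?_) hsq
  show |a k i| ≤ _
  rw [← Real.sqrt_sq_eq_abs]
  exact Real.sqrt_le_sqrt (sq_le_dot (a k) i)

lemma mulVec_norm_le {p q : ℕ} (M : Matrix (Fin p) (Fin q) ℝ) (w : Fin q → ℝ) :
    ‖M *ᵥ w‖ ≤ (∑ i, ∑ j, |M i j|) * ‖w‖ := by
  have hnn : (0:ℝ) ≤ (∑ i, ∑ j, |M i j|) * ‖w‖ :=
    mul_nonneg (Finset.sum_nonneg fun i _ => Finset.sum_nonneg fun j _ => abs_nonneg _)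
      (norm_nonneg _)
  rw [pi_norm_le_iff_of_nonneg hnn]
  intro i
  have h1 : (M *ᵥ w) i = ∑ j, M i j * w j := rfl
  rw [Real.norm_eq_abs, h1]
  calc |∑ j, M i j * w j| ≤ ∑ j, |M i j * w j| := Finset.abs_sum_le_sum_abs _ _
    _ ≤ ∑ j, |M i j| * ‖w‖ := by
        refine Finset.sum_le_sum fun j _ => ?_
        rw [abs_mul]
        exact mul_le_mul_of_nonneg_left (by rw [← Real.norm_eq_abs]; exact norm_le_pi_norm w j)
          (abs_nonneg _)
    _ = (∑ j, |M i j|) * ‖w‖ := by rw [Finset.sum_mul]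
    _ ≤ (∑ i, ∑ j, |M i j|) * ‖w‖ := by
        refine mul_le_mul_of_nonneg_right ?_ (norm_nonneg _)
        exact Finset.single_le_sum (f := fun i => ∑ j, |M i j|)
          (fun i _ => Finset.sum_nonneg fun j _ => abs_nonneg _) (Finset.mem_univ i)

end Analysis


/-- Stationarity measure given by the normal subproblem: under the stated regularity
conditions at a limit point `x*` of a subsequence `{x_k}_{k ∈ S}` of nonnegative points,
`x*` satisfies `0 ≤ x* ⊥ ∇c(x*)c(x*) ≥ 0` if and only if `v_k → 0` along `k ∈ S`,
where `v_k = u_k + ∇c(x_k)w_k` and `(u_k, w_k)` solves subproblem (V) at `x_k`. -/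
theorem normal_direction_stationarity_measure
    {n m : ℕ} (X : Set (Fin n → ℝ)) (hXopen : IsOpen X) (hXconv : Convex ℝ X)
    (c : (Fin n → ℝ) → (Fin m → ℝ))
    (Gc : (Fin n → ℝ) → Matrix (Fin n) (Fin m) ℝ)
    (hc : ∀ y ∈ X, HasFDerivAt c (LinearMap.toContinuousLinearMap ((Gc y)ᵀ).mulVecLin) y)
    (hGccont : ContinuousOn Gc X)
    (hrank : ∀ y ∈ X, Function.Injective (Gc y).mulVec)
    (xk : ℕ → (Fin n → ℝ)) (hxkX : ∀ k, xk k ∈ X) (hxk0 : ∀ k, 0 ≤ xk k)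
    (S : Set ℕ) (hS : S.Infinite)
    (xstar : Fin n → ℝ) (hxstarX : xstar ∈ X) (hxstar0 : 0 ≤ xstar)
    (hconv : Tendsto xk (atTop ⊓ Filter.principal S) (nhds xstar))
    -- (i): `[∇c(x*)c(x*)]ᵢ > 0` for all `i` in the active set `A(x*)`
    (hi : ∀ i, xstar i = 0 → 0 < ((Gc xstar) *ᵥ c xstar) i)
    -- (ii): the block matrix `[[0, ∇c(x*)ᵀ], [∇c(x*)_{A(x*)}, I_{A(x*)}]]` has full row
    -- rank, expressed as triviality of its left null space
    (hii : ∀ (y : Fin m → ℝ) (z : Fin n → ℝ), (∀ i, xstar i ≠ 0 → z i = 0) →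
        (Gc xstar)ᵀ *ᵥ z = 0 → (Gc xstar) *ᵥ y + z = 0 → y = 0 ∧ z = 0)
    (μ : ℝ) (hμ : 0 < μ)
    (uk : ℕ → (Fin n → ℝ)) (wk : ℕ → (Fin m → ℝ))
    (hfeas : ∀ k, feasV (Gc (xk k)) (xk k) (uk k, wk k))
    (hopt : ∀ k, ∀ q, feasV (Gc (xk k)) (xk k) q →
        objV (Gc (xk k)) (c (xk k)) μ (uk k, wk k) ≤ objV (Gc (xk k)) (c (xk k)) μ q) :
    (0 ≤ xstar ∧ 0 ≤ (Gc xstar) *ᵥ c xstar ∧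
        ∀ i, xstar i * ((Gc xstar) *ᵥ c xstar) i = 0) ↔
      Tendsto (fun k => uk k + (Gc (xk k)) *ᵥ wk k) (atTop ⊓ Filter.principal S) (nhds 0) := by
  classical
  set L := atTop ⊓ Filter.principal S with hL
  haveI hLne : L.NeBot := by
    rw [hL, inf_principal_neBot_iff]
    intro U hU
    obtain ⟨a, ha⟩ := mem_atTop_sets.mp hU
    obtain ⟨b, hbS, hab⟩ := hS.exists_gt a
    exact ⟨b, ha b hab.le, hbS⟩
  have hGk : Tendsto (fun k => Gc (xk k)) L (nhds (Gc xstar)) :=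
    ((hGccont.continuousAt (hXopen.mem_nhds hxstarX)).tendsto).comp hconv
  have hck : Tendsto (fun k => c (xk k)) L (nhds (c xstar)) :=
    ((hc xstar hxstarX).differentiableAt.continuousAt.tendsto).comp hconv
  have hkkt : ∀ k, (∀ i, 0 ≤ gradV (Gc (xk k)) (c (xk k)) μ (uk k) (wk k) i) ∧
      gradV (Gc (xk k)) (c (xk k)) μ (uk k) (wk k) ⬝ᵥ
        (xk k + uk k + Gc (xk k) *ᵥ wk k) = 0 := fun k =>
    kkt_of_opt _ _ _ _ _ _ hμ (hrank _ (hxkX k)) (hxk0 k) (hfeas k) (hopt k)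
  have hterm : ∀ k i, gradV (Gc (xk k)) (c (xk k)) μ (uk k) (wk k) i *
      (xk k + uk k + Gc (xk k) *ᵥ wk k) i = 0 := by
    intro k i
    have h2 := (hkkt k).2
    exact (Finset.sum_eq_zero_iff_of_nonneg
      (fun i _ => mul_nonneg ((hkkt k).1 i) ((hfeas k).2 i))).mp h2 i (Finset.mem_univ i)
  constructor
  · -- forward: stationarity ⇒ v → 0
    rintro ⟨-, hst1, hst2⟩
    by_contra hnot
    rw [Metric.tendsto_nhds] at hnot
    push_neg at hnot
    obtain ⟨ε, hε, hfreq⟩ := hnot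
    rw [hL, frequently_inf_principal] at hfreq
    obtain ⟨φ, hφmono, hφp⟩ := extraction_of_frequently_atTop hfreq
    have hφL : Tendsto φ atTop L := by
      rw [hL]
      exact tendsto_inf.mpr ⟨hφmono.tendsto_atTop,
        tendsto_principal.mpr (Eventually.of_forall fun j => (hφp j).1)⟩
    -- uniform bounds
    set B := c xstar ⬝ᵥ c xstar + 1 with hB
    have hBpos : 0 < B := by nlinarith [dot_self_nonneg (c xstar)]
    have hbb : ∀ᶠ k in L, c (xk k) ⬝ᵥ c (xk k) ≤ B :=
      (tendsto_dot' hck hck).eventually_le_const (by rw [hB]; linarith)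
    have hfeas0 : ∀ k, feasV (Gc (xk k)) (xk k) (0, 0) := by
      intro k
      refine ⟨Matrix.mulVec_zero _, ?_⟩
      show 0 ≤ xk k + 0 + Gc (xk k) *ᵥ 0
      simpa [Matrix.mulVec_zero] using hxk0 k
    have hobj : ∀ k,
        (c (xk k) + (Gc (xk k))ᵀ *ᵥ (Gc (xk k) *ᵥ wk k)) ⬝ᵥ
          (c (xk k) + (Gc (xk k))ᵀ *ᵥ (Gc (xk k) *ᵥ wk k)) + μ * (uk k ⬝ᵥ uk k)
        ≤ c (xk k) ⬝ᵥ c (xk k) := by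
      intro k
      have h := hopt k (0, 0) (hfeas0 k)
      rw [objV_eq, objV_eq] at h
      simp only [Matrix.mulVec_zero, add_zero, dotProduct_zero] at h
      linarith
    set Cu := Real.sqrt (B / μ) with hCu
    have hCuev : ∀ᶠ k in L, ‖uk k‖ ≤ Cu := by
      filter_upwards [hbb] with k hk
      have h1 : uk k ⬝ᵥ uk k ≤ B / μ := by
        rw [le_div_iff₀ hμ]
        have h2 := hobj k
        have h3 := dot_self_nonneg (c (xk k) + (Gc (xk k))ᵀ *ᵥ (Gc (xk k) *ᵥ wk k))
        nlinarith
      exact (norm_le_sqrt_dot _).trans (Real.sqrt_le_sqrt h1)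
    set Mk : ℕ → Matrix (Fin m) (Fin m) ℝ := fun k => (Gc (xk k))ᵀ * Gc (xk k) with hMk'
    set Mstar : Matrix (Fin m) (Fin m) ℝ := (Gc xstar)ᵀ * Gc xstar with hMstar'
    have hMzb : ∀ᶠ k in L, ‖Mk k *ᵥ wk k‖ ≤ 2 * Real.sqrt B := by
      filter_upwards [hbb] with k hk
      have h1 : Mk k *ᵥ wk k
          = (c (xk k) + (Gc (xk k))ᵀ *ᵥ (Gc (xk k) *ᵥ wk k)) - c (xk k) := by
        rw [hMk', ← Matrix.mulVec_mulVec]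
        abel
      rw [h1]
      have h2 : ‖c (xk k) + (Gc (xk k))ᵀ *ᵥ (Gc (xk k) *ᵥ wk k)‖ ≤ Real.sqrt B := by
        refine (norm_le_sqrt_dot _).trans (Real.sqrt_le_sqrt ?_)
        have h3 := hobj k
        have h4 := dot_self_nonneg (uk k)
        nlinarith
      have h5 : ‖c (xk k)‖ ≤ Real.sqrt B := by
        refine (norm_le_sqrt_dot _).trans (Real.sqrt_le_sqrt ?_)
        linarith
      calc ‖_ - _‖ ≤ _ + _ := norm_sub_le _ _
        _ ≤ 2 * Real.sqrt B := by linarith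
    have hMkt : Tendsto Mk L (nhds Mstar) := by
      have hcont : Continuous (fun p : Matrix (Fin n) (Fin m) ℝ => pᵀ * p) :=
        (continuous_id.matrix_transpose).matrix_mul continuous_id
      exact (hcont.tendsto _).comp hGk
    set sk : ℕ → ℝ := fun k => ∑ i, ∑ j, |(Mstar - Mk k) i j| with hsk'
    have hsknn : ∀ k, 0 ≤ sk k := fun k =>
      Finset.sum_nonneg fun i _ => Finset.sum_nonneg fun j _ => abs_nonneg _
    have hsub : Tendsto (fun k => Mstar - Mk k) L (nhds 0) := by
      have := tendsto_const_nhds (x := Mstar) (f := L) |>.sub hMkt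
      simpa using this
    have hskt : Tendsto sk L (nhds 0) := by
      have h := tendsto_finset_sum (Finset.univ : Finset (Fin m)) (fun i _ =>
        tendsto_finset_sum (Finset.univ : Finset (Fin m)) (fun j _ =>
          (tendsto_matrix_entry hsub i j).abs))
      simpa [hsk'] using h
    -- lower bound for Mstar
    have hGinjs := hrank xstar hxstarX
    have hbijs := A_bij (Gc xstar) hGinjs
    have hbij' : Function.Bijective (Mstar.mulVecLin) := by
      have he : ∀ w : Fin m → ℝ, Mstar.mulVecLin w = (Gc xstar)ᵀ *ᵥ (Gc xstar *ᵥ w) := by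
        intro w
        rw [mulVecLin_apply, hMstar', ← Matrix.mulVec_mulVec]
      constructor
      · intro a b hab
        apply hbijs.1 (a₁ := a) (a₂ := b)
        show (Gc xstar)ᵀ *ᵥ (Gc xstar *ᵥ a) = (Gc xstar)ᵀ *ᵥ (Gc xstar *ᵥ b)
        exact (he a).symm.trans (hab.trans (he b))
      · intro y
        obtain ⟨w, hw⟩ := hbijs.2 y
        exact ⟨w, (he w).trans hw⟩
    set e : (Fin m → ℝ) ≃ₗ[ℝ] (Fin m → ℝ) := LinearEquiv.ofBijective Mstar.mulVecLin hbij'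
      with he'
    set ce := e.toContinuousLinearEquiv with hce'
    set C := ‖(ce.symm : (Fin m → ℝ) →L[ℝ] (Fin m → ℝ))‖ with hC
    have hCnn : 0 ≤ C := norm_nonneg _
    have hCw0 : ∀ w : Fin m → ℝ, ‖w‖ ≤ C * ‖Mstar *ᵥ w‖ := by
      intro w
      have h1 : ce.symm (ce w) = w := ce.symm_apply_apply w
      have h2 : (ce w : Fin m → ℝ) = Mstar *ᵥ w := by
        show e w = _
        rw [he', LinearEquiv.ofBijective_apply, mulVecLin_apply]
      calc ‖w‖ = ‖ce.symm (ce w)‖ := by rw [h1]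
        _ ≤ C * ‖ce w‖ := by
            have := (ce.symm : (Fin m → ℝ) →L[ℝ] (Fin m → ℝ)).le_opNorm (ce w)
            simpa using this
        _ = C * ‖Mstar *ᵥ w‖ := by rw [h2]
    set Cw := 4 * C * Real.sqrt B with hCw'
    have hskev : ∀ᶠ k in L, sk k ≤ 1 / (2 * (C + 1)) :=
      hskt.eventually_le_const (by positivity)
    have hCwev : ∀ᶠ k in L, ‖wk k‖ ≤ Cw := by
      filter_upwards [hMzb, hskev] with k h1 h2
      have h3 : ‖Mstar *ᵥ wk k‖ ≤ ‖Mk k *ᵥ wk k‖ + sk k * ‖wk k‖ := by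
        have heq : Mstar *ᵥ wk k = Mk k *ᵥ wk k + (Mstar - Mk k) *ᵥ wk k := by
          rw [Matrix.sub_mulVec]; abel
        rw [heq]
        exact (norm_add_le _ _).trans (add_le_add le_rfl (mulVec_norm_le _ _))
      have h4 := hCw0 (wk k)
      have h5 : C * sk k ≤ 1 / 2 := by
        calc C * sk k ≤ (C + 1) * (1 / (2 * (C + 1))) :=
              mul_le_mul (by linarith) h2 (hsknn k) (by linarith)
          _ = 1 / 2 := by field_simp
      have h6 : C * ‖Mstar *ᵥ wk k‖ ≤ C * (‖Mk k *ᵥ wk k‖ + sk k * ‖wk k‖) :=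
        mul_le_mul_of_nonneg_left h3 hCnn
      have h7 : C * ‖Mk k *ᵥ wk k‖ ≤ C * (2 * Real.sqrt B) :=
        mul_le_mul_of_nonneg_left h1 hCnn
      have h8 : (C * sk k) * ‖wk k‖ ≤ (1/2) * ‖wk k‖ :=
        mul_le_mul_of_nonneg_right h5 (norm_nonneg _)
      rw [hCw']
      nlinarith [norm_nonneg (wk k)]
    -- pull back along φ and shift
    have hEv : ∀ᶠ k in L, ‖uk k‖ ≤ Cu ∧ ‖wk k‖ ≤ Cw := hCuev.and hCwev
    obtain ⟨N, hN⟩ := eventually_atTop.mp (hφL.eventually hEv)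
    set ψ0 : ℕ → ℕ := fun j => φ (j + N) with hψ0
    have hψ0mono : StrictMono ψ0 := fun a b hab => hφmono (by omega)
    have hψ0S : ∀ j, ψ0 j ∈ S := fun j => (hφp _).1
    have hψ0d : ∀ j, ε ≤ dist (uk (ψ0 j) + Gc (xk (ψ0 j)) *ᵥ wk (ψ0 j)) 0 :=
      fun j => (hφp _).2
    have hψ0u : ∀ j, ‖uk (ψ0 j)‖ ≤ Cu := fun j => (hN (j + N) (by omega)).1
    have hψ0w : ∀ j, ‖wk (ψ0 j)‖ ≤ Cw := fun j => (hN (j + N) (by omega)).2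
    obtain ⟨uinf, -, ψ1, hψ1mono, hψ1lim⟩ := tendsto_subseq_of_bounded
      (Metric.isBounded_closedBall (x := (0 : Fin n → ℝ)) (r := Cu))
      (x := fun j => uk (ψ0 j))
      (fun j => by rw [Metric.mem_closedBall, dist_zero_right]; exact hψ0u j)
    obtain ⟨winf, -, ψ2, hψ2mono, hψ2lim⟩ := tendsto_subseq_of_bounded
      (Metric.isBounded_closedBall (x := (0 : Fin m → ℝ)) (r := Cw))
      (x := fun j => wk (ψ0 (ψ1 j)))
      (fun j => by rw [Metric.mem_closedBall, dist_zero_right]; exact hψ0w _)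
    set σ : ℕ → ℕ := fun j => ψ0 (ψ1 (ψ2 j)) with hσ
    have hσmono : StrictMono σ := hψ0mono.comp (hψ1mono.comp hψ2mono)
    have hσL : Tendsto σ atTop L := by
      rw [hL]
      exact tendsto_inf.mpr ⟨hσmono.tendsto_atTop,
        tendsto_principal.mpr (Eventually.of_forall fun j => hψ0S _)⟩
    have huinf : Tendsto (fun j => uk (σ j)) atTop (nhds uinf) :=
      hψ1lim.comp hψ2mono.tendsto_atTop
    have hwinf : Tendsto (fun j => wk (σ j)) atTop (nhds winf) := hψ2lim
    have hxσ : Tendsto (fun j => xk (σ j)) atTop (nhds xstar) := hconv.comp hσL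
    have hGσ : Tendsto (fun j => Gc (xk (σ j))) atTop (nhds (Gc xstar)) := hGk.comp hσL
    have hcσ : Tendsto (fun j => c (xk (σ j))) atTop (nhds (c xstar)) := hck.comp hσL
    have hgσ : Tendsto (fun j => gradV (Gc (xk (σ j))) (c (xk (σ j))) μ (uk (σ j)) (wk (σ j)))
        atTop (nhds (gradV (Gc xstar) (c xstar) μ uinf winf)) := by
      have h := (tendsto_mulVec' hGσ (hcσ.add (tendsto_mulVec' (tendsto_transpose' hGσ)
        (tendsto_mulVec' hGσ hwinf)))).add (huinf.const_smul μ)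
      simpa only [gradV_def] using h
    have hxv : Tendsto (fun j => xk (σ j) + uk (σ j) + Gc (xk (σ j)) *ᵥ wk (σ j)) atTop
        (nhds (xstar + uinf + Gc xstar *ᵥ winf)) :=
      (hxσ.add huinf).add (tendsto_mulVec' hGσ hwinf)
    have hfeasinf : feasV (Gc xstar) xstar (uinf, winf) := by
      constructor
      · have h1 : Tendsto (fun j => (Gc (xk (σ j)))ᵀ *ᵥ uk (σ j)) atTop
            (nhds ((Gc xstar)ᵀ *ᵥ uinf)) := tendsto_mulVec' (tendsto_transpose' hGσ) huinf
        have h2 : (fun j => (Gc (xk (σ j)))ᵀ *ᵥ uk (σ j)) = fun _ => (0 : Fin m → ℝ) :=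
          funext fun j => (hfeas (σ j)).1
        rw [h2] at h1
        show (Gc xstar)ᵀ *ᵥ uinf = 0
        exact tendsto_nhds_unique h1 tendsto_const_nhds
      · show (0 : Fin n → ℝ) ≤ xstar + uinf + Gc xstar *ᵥ winf
        rw [Pi.le_def]
        intro i
        exact ge_of_tendsto' (tendsto_pi_nhds.mp hxv i) (fun j => (hfeas (σ j)).2 i)
    have hginf : ∀ i, 0 ≤ gradV (Gc xstar) (c xstar) μ uinf winf i :=
      fun i => ge_of_tendsto' (tendsto_pi_nhds.mp hgσ i) (fun j => (hkkt (σ j)).1 i)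
    have hcompinf : gradV (Gc xstar) (c xstar) μ uinf winf ⬝ᵥ
        (xstar + uinf + Gc xstar *ᵥ winf) = 0 := by
      have h4 := tendsto_dot' hgσ hxv
      have h5 : (fun j => gradV (Gc (xk (σ j))) (c (xk (σ j))) μ (uk (σ j)) (wk (σ j)) ⬝ᵥ
          (xk (σ j) + uk (σ j) + Gc (xk (σ j)) *ᵥ wk (σ j))) = fun _ => (0:ℝ) :=
        funext fun j => (hkkt (σ j)).2
      rw [h5] at h4
      exact tendsto_nhds_unique h4 tendsto_const_nhds
    -- KKT at (0,0) for x*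
    have hfeas0s : feasV (Gc xstar) xstar (0, 0) := by
      refine ⟨Matrix.mulVec_zero _, ?_⟩
      show 0 ≤ xstar + 0 + Gc xstar *ᵥ 0
      simpa [Matrix.mulVec_zero] using hxstar0
    have hgrad0 : gradV (Gc xstar) (c xstar) μ 0 0 = Gc xstar *ᵥ c xstar := by
      rw [gradV_def]
      simp [Matrix.mulVec_zero]
    have hg0 : ∀ i, 0 ≤ gradV (Gc xstar) (c xstar) μ 0 0 i := by
      intro i
      rw [hgrad0]
      exact hst1 i
    have hcomp0 : gradV (Gc xstar) (c xstar) μ 0 0 ⬝ᵥ (xstar + 0 + Gc xstar *ᵥ 0) = 0 := by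
      rw [hgrad0]
      have hx0 : xstar + 0 + Gc xstar *ᵥ 0 = xstar := by simp [Matrix.mulVec_zero]
      rw [hx0]
      exact Finset.sum_eq_zero fun i _ => by rw [mul_comm]; exact hst2 i
    have hle : objV (Gc xstar) (c xstar) μ (uinf, winf) ≤ objV (Gc xstar) (c xstar) μ (0, 0) :=
      opt_of_kkt (Gc xstar) (c xstar) μ xstar uinf winf hμ hfeasinf hginf hcompinf (0, 0) hfeas0s
    obtain ⟨hu0', hw0'⟩ := uniq_of_kkt (Gc xstar) (c xstar) μ xstar 0 0 hμ hGinjs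
      hfeas0s hg0 hcomp0 uinf winf hfeasinf hle
    have hvσ : Tendsto (fun j => uk (σ j) + Gc (xk (σ j)) *ᵥ wk (σ j)) atTop (nhds 0) := by
      have h := huinf.add (tendsto_mulVec' hGσ hwinf)
      rw [hu0', hw0'] at h
      simpa [Matrix.mulVec_zero] using h
    obtain ⟨j, hj⟩ := (Metric.tendsto_nhds.mp hvσ ε hε).exists
    have := hψ0d (ψ1 (ψ2 j))
    rw [hσ] at hj
    linarith [hj, this]
  · -- backward: v → 0 ⇒ stationarity
    intro hv
    have horth : ∀ k, (uk k) ⬝ᵥ (Gc (xk k) *ᵥ wk k) = 0 := by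
      intro k
      rw [dotProduct_comm, ← dot_adj, (hfeas k).1, dotProduct_zero]
    have hdotv : Tendsto (fun k => (uk k + Gc (xk k) *ᵥ wk k) ⬝ᵥ
        (uk k + Gc (xk k) *ᵥ wk k)) L (nhds 0) := by
      have := tendsto_dot' hv hv
      simpa using this
    have hsplit : ∀ k, (uk k + Gc (xk k) *ᵥ wk k) ⬝ᵥ (uk k + Gc (xk k) *ᵥ wk k)
        = uk k ⬝ᵥ uk k + (Gc (xk k) *ᵥ wk k) ⬝ᵥ (Gc (xk k) *ᵥ wk k) := by
      intro k
      have h := horth k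
      have h' : (Gc (xk k) *ᵥ wk k) ⬝ᵥ uk k = 0 := by rw [dotProduct_comm]; exact h
      simp only [dotProduct_add, add_dotProduct, h, h']
      ring
    have huu : Tendsto (fun k => uk k ⬝ᵥ uk k) L (nhds 0) := by
      refine squeeze_zero (fun k => dot_self_nonneg _) (fun k => ?_) hdotv
      rw [hsplit k]
      linarith [dot_self_nonneg (Gc (xk k) *ᵥ wk k)]
    have hzz : Tendsto (fun k => (Gc (xk k) *ᵥ wk k) ⬝ᵥ (Gc (xk k) *ᵥ wk k)) L (nhds 0) := by
      refine squeeze_zero (fun k => dot_self_nonneg _) (fun k => ?_) hdotv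
      rw [hsplit k]
      linarith [dot_self_nonneg (uk k)]
    have hu0 : Tendsto uk L (nhds 0) := tendsto_zero_of_dot huu
    have hz0 : Tendsto (fun k => Gc (xk k) *ᵥ wk k) L (nhds 0) := tendsto_zero_of_dot hzz
    have hA0 : Tendsto (fun k => (Gc (xk k))ᵀ *ᵥ (Gc (xk k) *ᵥ wk k)) L (nhds 0) := by
      have := tendsto_mulVec' (tendsto_transpose' hGk) hz0
      simpa [Matrix.mulVec_zero] using this
    have hgk : Tendsto (fun k => gradV (Gc (xk k)) (c (xk k)) μ (uk k) (wk k)) L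
        (nhds (Gc xstar *ᵥ c xstar)) := by
      have h1 := (tendsto_mulVec' hGk (hck.add hA0)).add (hu0.const_smul μ)
      simp only [add_zero, smul_zero] at h1
      simpa only [gradV_def] using h1
    refine ⟨hxstar0, ?_, ?_⟩
    · rw [Pi.le_def]
      intro i
      exact ge_of_tendsto' (tendsto_pi_nhds.mp hgk i) (fun k => (hkkt k).1 i)
    · intro i
      have hxvt : Tendsto (fun k => xk k + uk k + Gc (xk k) *ᵥ wk k) L (nhds xstar) := by
        have h := hconv.add hv
        have heq : (fun k => xk k + (uk k + Gc (xk k) *ᵥ wk k))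
            = fun k => xk k + uk k + Gc (xk k) *ᵥ wk k := funext fun k => by abel
        rw [heq] at h
        simpa using h
      have hmul := (tendsto_pi_nhds.mp hgk i).mul (tendsto_pi_nhds.mp hxvt i)
      have hzero : (fun k => gradV (Gc (xk k)) (c (xk k)) μ (uk k) (wk k) i *
          (xk k + uk k + Gc (xk k) *ᵥ wk k) i) = fun _ => (0:ℝ) :=
        funext fun k => hterm k i
      rw [hzero] at hmul
      have h := tendsto_nhds_unique hmul tendsto_const_nhds
      rw [mul_comm] at h
      exact h
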